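/- If Z_1, ..., Z_{N+1} are i.i.d. real random variables with a continuous (atomless) distribution, then P(Z_{N+1} ≤ Z_{(κ)}) = κ/(N+1) for every κ ∈ {1,...,N}, where Z_{(κ)} is the κ-th order statistic of Z_1,...,Z_N. -/

import Mathlib

/-!
The joint law of `Z₁, …, Z_{N+1}` is the product `μ^{⊗(N+1)}`, which is invariant under
permutations of the coordinates and, `μ` being atomless, charges only tuples with distinct
entries. On such a tuple exactly one coordinate has exactly `j` entries strictly below it, so
by exchangeability that count is uniform on `{0, …, N}` for the last coordinate. Finally
`Z_{N+1} ≤ Z_{(κ)}` holds iff fewer than `κ` of `Z₁, …, Z_N` lie strictly below `Z_{N+1}`.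
-/

open MeasureTheory ProbabilityTheory Finset
open scoped ENNReal

noncomputable def orderStat {n : ℕ} (f : Fin n → ℝ) (i : Fin n) : ℝ :=
  f (Tuple.sort f i)

section countLT

variable {ι ι' α : Type*} [Fintype ι] [LinearOrder α]

def countLT (z : ι → α) (p : ι) : ℕ :=
  #{i | z i < z p}

lemma countLT_lt_countLT {z : ι → α} {p q : ι} (h : z p < z q) :
    countLT z p < countLT z q := by
  refine card_lt_card <| (ssubset_iff_of_subset fun i hi => ?_).2 ⟨p, ?_, ?_⟩
  · simp only [mem_filter, mem_univ, true_and] at hi ⊢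
    exact hi.trans h
  · simpa using h
  · simp

lemma countLT_lt_card (z : ι → α) (p : ι) : countLT z p < Fintype.card ι :=
  card_lt_card <| filter_ssubset.2 ⟨p, mem_univ p, lt_irrefl _⟩

lemma countLT_injective {z : ι → α} (hz : Function.Injective z) :
    Function.Injective (countLT z) := by
  intro p q h
  by_contra hpq
  rcases lt_or_gt_of_ne (hz.ne hpq) with hlt | hlt
  · exact (countLT_lt_countLT hlt).ne h
  · exact (countLT_lt_countLT hlt).ne' h

lemma exists_countLT_eq {z : ι → α} (hz : Function.Injective z) {j : ℕ}
    (hj : j < Fintype.card ι) : ∃ p, countLT z p = j := by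
  let r : ι → Fin (Fintype.card ι) := fun p => ⟨countLT z p, countLT_lt_card z p⟩
  have hr : Function.Injective r := fun p q h => countLT_injective hz (Fin.val_eq_of_eq h)
  obtain ⟨p, hp⟩ := ((Fintype.bijective_iff_injective_and_card r).2 ⟨hr, by simp⟩).2 ⟨j, hj⟩
  exact ⟨p, Fin.val_eq_of_eq hp⟩

lemma countLT_comp_equiv [Fintype ι'] (z : ι → α) (e : ι' ≃ ι) (p : ι') :
    countLT (z ∘ e) p = countLT z (e p) :=
  card_equiv e (by simp)

lemma countLT_last {n : ℕ} (z : Fin (n + 1) → α) :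
    countLT z (Fin.last n) = #{i : Fin n | z i.castSucc < z (Fin.last n)} := by
  rw [countLT, card_filter, card_filter, Fin.sum_univ_castSucc]
  simp

end countLT

lemma Monotone.le_iff_card_filter_lt_le {α : Type*} [LinearOrder α] {n : ℕ} {g : Fin n → α}
    (hg : Monotone g) (k : Fin n) (x : α) : x ≤ g k ↔ #{i | g i < x} ≤ k := by
  constructor
  · intro hx
    calc #{i | g i < x} ≤ #(Iio k) :=
          card_le_card fun i hi => by
            simp only [mem_filter, mem_univ, true_and] at hi
            exact mem_Iio.2 (lt_of_not_ge fun hki => (hx.trans (hg hki)).not_gt hi)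
      _ = k := Fin.card_Iio k
  · intro hcard
    by_contra! hx
    have : #(Iic k) ≤ #{i | g i < x} :=
      card_le_card fun i hi => by simpa using (hg (mem_Iic.1 hi)).trans_lt hx
    rw [Fin.card_Iic] at this
    omega

lemma le_orderStat_iff {n : ℕ} (f : Fin n → ℝ) (k : Fin n) (x : ℝ) :
    x ≤ orderStat f k ↔ #{i | f i < x} ≤ k := by
  rw [orderStat, ← Function.comp_apply (f := f), (Tuple.monotone_sort f).le_iff_card_filter_lt_le,
    card_equiv (Tuple.sort f) (t := {i | f i < x}) (by simp)]

lemma ProbabilityTheory.IndepFun.measure_eq_eq_zero {Ω β : Type*} [MeasurableSpace Ω]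
    [MeasurableSpace β] [MeasurableEq β] {P : Measure Ω} [IsProbabilityMeasure P] {X Y : Ω → β}
    (hXY : IndepFun X Y P) (hX : AEMeasurable X P) (hY : AEMeasurable Y P)
    [NullSingletonClass (P.map Y)] : P {ω | X ω = Y ω} = 0 := by
  have hdiag : MeasurableSet {q : β × β | q.1 = q.2} := measurableSet_diagonal
  rw [← Set.preimage_ofPred_eq (f := fun ω => (X ω, Y ω)) (p := fun q => q.1 = q.2),
    ← Measure.map_apply_of_aemeasurable (hX.prodMk hY) hdiag,
    (indepFun_iff_map_prod_eq_prod_map_map hX hY).1 hXY, Measure.prod_apply hdiag]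
  simp [Set.preimage]

lemma measurePreserving_pi_comp_perm {ι β : Type*} [Fintype ι] [MeasurableSpace β]
    (μ : Measure β) [SigmaFinite μ] (e : Equiv.Perm ι) :
    MeasurePreserving (fun z : ι → β => z ∘ e) (Measure.pi fun _ => μ)
      (Measure.pi fun _ => μ) := by
  convert measurePreserving_piCongrLeft (fun _ : ι => μ) e.symm using 1
  ext z i
  simp [MeasurableEquiv.coe_piCongrLeft, Equiv.piCongrLeft_apply_eq_cast]

lemma ae_injective_pi {ι β : Type*} [Fintype ι] [MeasurableSpace β] [MeasurableEq β]
    (μ : Measure β) [IsProbabilityMeasure μ] [NullSingletonClass μ] :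
    ∀ᵐ z ∂Measure.pi fun _ : ι => μ, Function.Injective z := by
  have hcoord : iIndepFun (fun i (z : ι → β) => z i) (Measure.pi fun _ => μ) :=
    iIndepFun_pi (X := fun _ => id) fun _ => aemeasurable_id
  have hlaw (i : ι) : (Measure.pi fun _ => μ).map (fun z : ι → β => z i) = μ :=
    (measurePreserving_eval _ i).map_eq
  have htie (i j : ι) : ∀ᵐ z ∂Measure.pi fun _ : ι => μ, z i = z j → i = j := by
    by_cases hij : i = j
    · exact .of_forall fun _ _ => hij
    have : NullSingletonClass ((Measure.pi fun _ => μ).map fun z : ι → β => z j) := by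
      rw [hlaw j]; infer_instance
    filter_upwards [measure_eq_zero_iff_ae_notMem.1 <|
      (hcoord.indepFun hij).measure_eq_eq_zero (measurable_pi_apply i).aemeasurable
        (measurable_pi_apply j).aemeasurable] with z hz h
    exact absurd h hz
  filter_upwards [ae_all_iff.2 fun i => ae_all_iff.2 (htie i)] with z hz using fun i j => hz i j

section UniformRank

variable {ι : Type*} [Fintype ι]

lemma measurable_countLT (p : ι) : Measurable fun z : ι → ℝ => countLT z p := by
  simp only [countLT, card_filter]
  exact Finset.measurable_sum _ fun i _ => Measurable.ite
    (measurableSet_lt (measurable_pi_apply i) (measurable_pi_apply p)) measurable_const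
    measurable_const

variable (μ : Measure ℝ) [IsProbabilityMeasure μ] [NullSingletonClass μ]

lemma pi_countLT_eq (p : ι) {j : ℕ} (hj : j < Fintype.card ι) :
    Measure.pi (fun _ => μ) {z | countLT z p = j} = (Fintype.card ι : ℝ≥0∞)⁻¹ := by
  classical
  set ν := Measure.pi fun _ : ι => μ
  set A : ι → Set (ι → ℝ) := fun q => {z | countLT z q = j}
  have hA (q : ι) : MeasurableSet (A q) := measurable_countLT q (measurableSet_singleton j)
  have hsame (q : ι) : ν (A q) = ν (A p) := by
    have := (measurePreserving_pi_comp_perm μ (Equiv.swap p q)).measure_preimage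
      (hA p).nullMeasurableSet
    simpa [A, Set.preimage, countLT_comp_equiv] using this
  have hdisj : Pairwise (Function.onFun (AEDisjoint ν) A) := fun q r hqr =>
    measure_mono_null (fun z (hz : z ∈ A q ∩ A r) hinj =>
      hqr (countLT_injective hinj (hz.1.trans hz.2.symm))) (ae_iff.1 (ae_injective_pi μ))
  have hcover : ν (⋃ q, A q) = 1 := by
    rw [← measure_univ (μ := ν),
      ← ae_mem_iff_measure_eq (MeasurableSet.iUnion hA).nullMeasurableSet]
    filter_upwards [ae_injective_pi μ] with z hz using Set.mem_iUnion.2 (exists_countLT_eq hz hj)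
  rw [measure_iUnion₀ hdisj fun q => (hA q).nullMeasurableSet, tsum_fintype,
    sum_congr rfl fun q _ => hsame q, sum_const, card_univ, nsmul_eq_mul] at hcover
  exact ENNReal.eq_inv_of_mul_eq_one_left (by rw [mul_comm]; exact hcover)

lemma pi_countLT_lt (p : ι) {k : ℕ} (hk : k ≤ Fintype.card ι) :
    Measure.pi (fun _ => μ) {z | countLT z p < k} = k / Fintype.card ι := by
  have hunion : {z : ι → ℝ | countLT z p < k} = ⋃ j ∈ range k, {z | countLT z p = j} := by
    ext z; simp
  rw [hunion, measure_biUnion_finset (f := fun j => {z | countLT z p = j})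
    (fun i _ j _ hij => Set.disjoint_left.2 fun z hi hj => hij (hi.symm.trans hj))
    fun j _ => measurable_countLT p (measurableSet_singleton j),
    sum_congr rfl fun j hj => pi_countLT_eq μ p ((mem_range.1 hj).trans_le hk), sum_const,
    card_range, nsmul_eq_mul, div_eq_mul_inv]

end UniformRank

/-- Exact conformal coverage: if Z_1,…,Z_{N+1} are i.i.d. with an atomless
distribution, then P(Z_{N+1} ≤ Z_{(κ)}) = κ/(N+1) for every κ ∈ {1,…,N}. -/
theorem iid_atomless_order_stat_exact_coverage
    {Ω : Type*} [MeasurableSpace Ω] (P : Measure Ω) [IsProbabilityMeasure P]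
    (N : ℕ) (Z : Fin (N + 1) → Ω → ℝ)
    (μ : Measure ℝ) [IsProbabilityMeasure μ] [NullSingletonClass μ]
    (hident : ∀ i, Measure.map (Z i) P = μ)
    (hindep : iIndepFun Z P)
    (κ : ℕ) (hκ1 : 1 ≤ κ) (hκN : κ ≤ N) :
    P {ω | Z (Fin.last N) ω ≤
        orderStat (fun i : Fin N => Z i.castSucc ω) ⟨κ - 1, by omega⟩} =
      ENNReal.ofReal ((κ : ℝ) / (N + 1)) := by
  have hZ (i : Fin (N + 1)) : AEMeasurable (Z i) P :=
    .of_map_ne_zero (by rw [hident i]; exact IsProbabilityMeasure.ne_zero μ)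
  have hlaw : P.map (fun ω i => Z i ω) = Measure.pi fun _ => μ := by
    rw [hindep.map_fun_eq_pi_map hZ]
    simp only [hident]
  have hevent : {ω | Z (Fin.last N) ω ≤
      orderStat (fun i : Fin N => Z i.castSucc ω) ⟨κ - 1, by omega⟩} =
      (fun ω i => Z i ω) ⁻¹' {z | countLT z (Fin.last N) < κ} := by
    ext ω
    simp only [Set.mem_ofPred_eq, Set.mem_preimage, le_orderStat_iff, countLT_last]
    omega
  have hset : MeasurableSet {z : Fin (N + 1) → ℝ | countLT z (Fin.last N) < κ} :=
    measurable_countLT _ measurableSet_Iio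
  rw [hevent, ← Measure.map_apply_of_aemeasurable (aemeasurable_pi_lambda _ hZ) hset, hlaw,
    pi_countLT_lt μ _ (by simpa using hκN.trans N.le_succ), Fintype.card_fin,
    ENNReal.ofReal_div_of_pos (by positivity)]
  norm_cast
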